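/- Let w : ℝ² → ℝ be a bounded differentiable function whose gradient is bounded, with ‖w‖∞ = sup_{z∈ℝ²} |w(z)| and ‖∇w‖∞ = sup_{z∈ℝ²} ‖∇w(z)‖₂. If u = (a,b) and v = (c,d) in ℝ² satisfy a ≤ c ≤ b ≤ d (overlapping, non-nested intervals), then for any L ≥ max{b−a, d−c}, ∫_ℝ |w(u)·χ_{[a,b)}(t) − w(v)·χ_{[c,d)}(t)| dt ≤ (‖w‖∞ + L·‖∇w‖∞)·‖u−v‖₁, where ‖u−v‖₁ = |a−c| + |b−d|. -/

import Mathlib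

/-!
Splitting `[a, b) = [a, c) ∪ [c, b)` and `[c, d) = [c, b) ∪ [b, d)`, the integrand is at most
`|w u|` on `[a, c)`, `|w u - w v|` on `[c, b)` and `|w v|` on `[b, d)`. The outer pieces have total
length `(c - a) + (d - b) = ‖u - v‖₁` and contribute at most `W ‖u - v‖₁`; on the middle piece,
of length `b - c ≤ L`, the mean value inequality bounds the jump by `Wg ‖u - v‖₂ ≤ Wg ‖u - v‖₁`.
-/

open MeasureTheory

/-- The indicator function of the half-open interval `[a, b)`. -/
noncomputable def chiIco (a b t : ℝ) : ℝ :=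
  Set.indicator (Set.Ico a b) (fun _ => (1 : ℝ)) t

/-- The point `(a, b)` viewed as an element of the Euclidean plane `ℝ²`. -/
noncomputable def pt (a b : ℝ) : EuclideanSpace ℝ (Fin 2) :=
  (WithLp.equiv 2 (Fin 2 → ℝ)).symm ![a, b]

lemma chiIco_nonneg (a b t : ℝ) : 0 ≤ chiIco a b t :=
  Set.indicator_nonneg (fun _ _ => zero_le_one) t

lemma chiIco_add_chiIco {a b c : ℝ} (hab : a ≤ b) (hbc : b ≤ c) (t : ℝ) :
    chiIco a b t + chiIco b c t = chiIco a c t := by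
  simp only [chiIco, Set.indicator_apply, Set.mem_Ico]
  split_ifs <;> grind

lemma integrable_const_mul_chiIco (k a b : ℝ) : Integrable (fun t => k * chiIco a b t) :=
  ((integrable_indicator_iff measurableSet_Ico).2
    (integrableOn_const measure_Ico_lt_top.ne)).const_mul k

lemma integral_const_mul_chiIco (k : ℝ) {a b : ℝ} (hab : a ≤ b) :
    ∫ t, k * chiIco a b t = k * (b - a) := by
  rw [integral_const_mul]
  change k * ∫ t, (Set.Ico a b).indicator 1 t = _
  rw [integral_indicator_one measurableSet_Ico, Real.volume_real_Ico_of_le hab]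

lemma abs_mul_chiIco_sub_le (x y : ℝ) {a b c d : ℝ} (hac : a ≤ c) (hcb : c ≤ b) (hbd : b ≤ d)
    (t : ℝ) :
    |x * chiIco a b t - y * chiIco c d t|
      ≤ |x| * chiIco a c t + |x - y| * chiIco c b t + |y| * chiIco b d t := by
  have hsplit : x * chiIco a b t - y * chiIco c d t
      = x * chiIco a c t + (x - y) * chiIco c b t - y * chiIco b d t := by
    rw [← chiIco_add_chiIco hac hcb, ← chiIco_add_chiIco hcb hbd]
    ring
  rw [hsplit]
  calc _ ≤ |x * chiIco a c t| + |(x - y) * chiIco c b t| + |y * chiIco b d t| :=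
        (abs_sub _ _).trans (add_le_add_left (abs_add_le _ _) _)
    _ = _ := by simp only [abs_mul, abs_of_nonneg (chiIco_nonneg _ _ _)]

lemma integral_abs_mul_chiIco_sub_le (x y : ℝ) {a b c d : ℝ} (hac : a ≤ c) (hcb : c ≤ b)
    (hbd : b ≤ d) :
    ∫ t, |x * chiIco a b t - y * chiIco c d t|
      ≤ |x| * (c - a) + |x - y| * (b - c) + |y| * (d - b) := by
  have hint := ((integrable_const_mul_chiIco |x| a c).add
    (integrable_const_mul_chiIco |x - y| c b)).add (integrable_const_mul_chiIco |y| b d)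
  calc _ ≤ ∫ t, (|x| * chiIco a c t + |x - y| * chiIco c b t + |y| * chiIco b d t) :=
        integral_mono_of_nonneg (.of_forall fun _ => abs_nonneg _) hint
          (.of_forall (abs_mul_chiIco_sub_le x y hac hcb hbd))
    _ = _ := by
      rw [integral_add _ (integrable_const_mul_chiIco _ _ _),
        integral_add (integrable_const_mul_chiIco _ _ _) (integrable_const_mul_chiIco _ _ _),
        integral_const_mul_chiIco _ hac, integral_const_mul_chiIco _ hcb,
        integral_const_mul_chiIco _ hbd]
      exact (integrable_const_mul_chiIco _ _ _).add (integrable_const_mul_chiIco _ _ _)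

lemma abs_sub_le_of_norm_gradient_le {E : Type*} [NormedAddCommGroup E] [InnerProductSpace ℝ E]
    [CompleteSpace E] {f : E → ℝ} {C : ℝ} (hf : Differentiable ℝ f)
    (hC : ∀ z, ‖gradient f z‖ ≤ C) (x y : E) :
    |f x - f y| ≤ C * ‖x - y‖ :=
  convex_univ.norm_image_sub_le_of_norm_fderiv_le (fun z _ => hf z)
    (fun z _ => by simpa only [gradient, LinearIsometryEquiv.norm_map] using hC z)
    (Set.mem_univ y) (Set.mem_univ x)

lemma norm_pt_le (x y : ℝ) : ‖pt x y‖ ≤ |x| + |y| := by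
  rw [EuclideanSpace.norm_eq, Fin.sum_univ_two, Real.sqrt_le_left (by positivity)]
  simp only [pt, WithLp.equiv_symm_apply, Matrix.cons_val_zero, Matrix.cons_val_one,
    Matrix.cons_val_fin_one, Real.norm_eq_abs, sq_abs]
  nlinarith [abs_nonneg x, abs_nonneg y, sq_abs x, sq_abs y]

lemma pt_sub_pt (a b c d : ℝ) : pt a b - pt c d = pt (a - c) (b - d) := by
  ext i
  fin_cases i <;> simp [pt]

/-- **Case 1 of Lemma 1 (overlapping, non-nested intervals).** If `w : ℝ² → ℝ` is a
bounded differentiable function whose gradient is bounded (`W` bounds `|w|`, `Wg` bounds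
the Euclidean norm of `∇w`) and `a ≤ c ≤ b ≤ d`, then for any `L ≥ max (b-a) (d-c)`,
`∫ℝ |w(u)·χ_{[a,b)}(t) − w(v)·χ_{[c,d)}(t)| dt ≤ (W + L·Wg)·(|a−c| + |b−d|)`
where `u = (a,b)` and `v = (c,d)`. -/
theorem betti_term_stability_overlapping
    (w : EuclideanSpace ℝ (Fin 2) → ℝ) (W Wg : ℝ)
    (hdiff : Differentiable ℝ w)
    (hW : ∀ z, |w z| ≤ W)
    (hWg : ∀ z, ‖gradient w z‖ ≤ Wg)
    (a b c d L : ℝ) (hac : a ≤ c) (hcb : c ≤ b) (hbd : b ≤ d)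
    (hL : max (b - a) (d - c) ≤ L) :
    ∫ t : ℝ, |w (pt a b) * chiIco a b t - w (pt c d) * chiIco c d t|
      ≤ (W + L * Wg) * (|a - c| + |b - d|) := by
  have hdist : |a - c| + |b - d| = (c - a) + (d - b) := by
    rw [abs_of_nonpos (by linarith), abs_of_nonpos (by linarith)]; ring
  have hWg0 : 0 ≤ Wg := (norm_nonneg _).trans (hWg 0)
  have hjump : |w (pt a b) - w (pt c d)| ≤ Wg * ((c - a) + (d - b)) := by
    calc _ ≤ Wg * ‖pt a b - pt c d‖ := abs_sub_le_of_norm_gradient_le hdiff hWg _ _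
      _ ≤ Wg * (|a - c| + |b - d|) := by
        rw [pt_sub_pt]; exact mul_le_mul_of_nonneg_left (norm_pt_le _ _) hWg0
      _ = _ := by rw [hdist]
  have hbc : b - c ≤ L := by linarith [le_max_left (b - a) (d - c)]
  have hmiddle : |w (pt a b) - w (pt c d)| * (b - c) ≤ L * Wg * ((c - a) + (d - b)) := by
    calc _ ≤ Wg * ((c - a) + (d - b)) * L :=
          mul_le_mul hjump hbc (by linarith) (mul_nonneg hWg0 (by linarith))
      _ = _ := by ring
  have hleft := mul_le_mul_of_nonneg_right (hW (pt a b)) (sub_nonneg.2 hac)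
  have hright := mul_le_mul_of_nonneg_right (hW (pt c d)) (sub_nonneg.2 hbd)
  rw [hdist]
  linarith [integral_abs_mul_chiIco_sub_le (w (pt a b)) (w (pt c d)) hac hcb hbd]
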